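/- Let S be a set of pmfs such that q = ⋀S exists. Then q is majorized by every element of S: q ⪯ p for every p ∈ S. -/

import Mathlib

open scoped ENNReal Classical
open Filter

namespace MEC

/-- A probability mass function on `α`: (nonnegative) masses summing to `1`. -/
def IsPMF {α : Type*} (p : α → ℝ≥0∞) : Prop := ∑' x, p x = 1

/-- `p` is an aggregation of `q`, written `q ⊑ p`: there is a map `g` sending the support of
`q` into the support of `p` such that `p` is the pushforward of `q` under `g`. -/
def Agg {α β : Type*} (q : α → ℝ≥0∞) (p : β → ℝ≥0∞) : Prop :=
  ∃ g : α → β, (∀ x, q x ≠ 0 → p (g x) ≠ 0) ∧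
    ∀ y, p y = ∑' x, if g x = y then q x else 0

/-- Sum of the `k` largest masses of `p`, i.e. `max_{A, |A| ≤ k} p(A)`. -/
noncomputable def topk {α : Type*} (p : α → ℝ≥0∞) (k : ℕ) : ℝ≥0∞ :=
  ⨆ (A : Finset α) (_ : A.card ≤ k), ∑ x ∈ A, p x

/-- `q` is majorized by `p`, written `q ⪯ p`: for every `k`, the sum of the `k` largest
masses of `q` is at most the sum of the `k` largest masses of `p`. -/
def Majorized {α β : Type*} (q : α → ℝ≥0∞) (p : β → ℝ≥0∞) : Prop :=
  ∀ k : ℕ, topk q k ≤ topk p k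

/-- Product pmf `(q × r)(x,z) = q(x) · r(z)`. -/
noncomputable def prodFun {α β : Type*} (q : α → ℝ≥0∞) (r : β → ℝ≥0∞) : α × β → ℝ≥0∞ :=
  fun z => q z.1 * r z.2

/-- `Geom_{1/2}` on `ℕ+ = {1,2,3,...}`, with mass `2^{-x}` at `x`. -/
noncomputable def geomHalf : ℕ+ → ℝ≥0∞ := fun x => 2⁻¹ ^ (x : ℕ)

/-- Capped geometric distribution `CGeom_{1/2,k}` on `{1,...,k} ⊆ ℕ+`. -/
noncomputable def cgeomHalf (k : ℕ) : ℕ+ → ℝ≥0∞ := fun x =>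
  if (x : ℕ) < k then 2⁻¹ ^ (x : ℕ) else if (x : ℕ) = k then 2⁻¹ ^ (k - 1) else 0

/-- `inf_{p ∈ S} max_{A ⊆ supp(p), |A| ≤ k} p(A)`. -/
noncomputable def infTopk {α : Type*} (S : Set (α → ℝ≥0∞)) (k : ℕ) : ℝ≥0∞ :=
  ⨅ p ∈ S, topk p k

/-- The greatest lower bound `⋀S` of `S` with respect to majorization, as a pmf on
`ℕ+ = {1,2,...}`, with `(⋀S)(k) = inf_{p∈S} max_{|A|≤k} p(A) − inf_{p∈S} max_{|A|≤k−1} p(A)`. -/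
noncomputable def glb {α : Type*} (S : Set (α → ℝ≥0∞)) : ℕ+ → ℝ≥0∞ :=
  fun k => infTopk S (k : ℕ) - infTopk S ((k : ℕ) - 1)

/-- Condition for the existence of `⋀S`:
`lim_{k→∞} inf_{p∈S} max_{A⊆supp(p), |A|≤k} p(A) = 1`. -/
def GlbExists {α : Type*} (S : Set (α → ℝ≥0∞)) : Prop :=
  Tendsto (fun k => infTopk S k) atTop (nhds 1)

/-- Base-2 logarithm on `ℝ≥0∞` (intended for arguments in `[1,∞]`). -/
noncomputable def log2 (x : ℝ≥0∞) : ℝ≥0∞ :=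
  if x = ∞ then ∞ else ENNReal.ofReal (Real.logb 2 x.toReal)

/-- Shannon entropy (base 2): `H(p) = Σ_x p(x) log₂ (1/p(x))`. -/
noncomputable def shannon {α : Type*} (p : α → ℝ≥0∞) : ℝ≥0∞ :=
  ∑' x, p x * log2 (p x)⁻¹

/-- Rényi entropy of order `a ∈ [0,∞]` (base 2):
`H_a(p) = (1/(1−a)) log₂ Σ_{x ∈ supp(p)} p(x)^a` for `a ∉ {1,∞}` (for `a > 1` this is
written in the equivalent form `(1/(a−1)) log₂ (Σ_{x ∈ supp(p)} p(x)^a)⁻¹` so that it is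
nonnegative), Shannon entropy for `a = 1`, and `−log₂ max_x p(x)` for `a = ∞`. -/
noncomputable def renyi {α : Type*} (p : α → ℝ≥0∞) (a : ℝ≥0∞) : ℝ≥0∞ :=
  if a = 1 then shannon p
  else if a = ∞ then log2 (⨆ x, p x)⁻¹
  else if a < 1 then log2 (∑' x, if p x = 0 then 0 else p x ^ a.toReal) * (1 - a)⁻¹
  else log2 (∑' x, if p x = 0 then 0 else p x ^ a.toReal)⁻¹ * (a - 1)⁻¹

/-- `q ∈ Γ̃(S)`: `q` (a pmf over `ℕ`, without loss of generality) is an underlying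
distribution of a coupling of `S`, i.e. `q ⊑ p` for every `p ∈ S`. -/
def UnderlyingCoupling {α : Type*} (S : Set (α → ℝ≥0∞)) (q : ℕ → ℝ≥0∞) : Prop :=
  IsPMF q ∧ ∀ p ∈ S, Agg q p

/-- `H*_a(S) = inf_{q ∈ Γ̃(S)} H_a(q)`, the minimum Rényi entropy of couplings of `S`. -/
noncomputable def minRenyi {α : Type*} (S : Set (α → ℝ≥0∞)) (a : ℝ≥0∞) : ℝ≥0∞ :=
  ⨅ (q : ℕ → ℝ≥0∞) (_ : UnderlyingCoupling S q), renyi q a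

/-!
Let `f k = inf_{p ∈ S} topk p k`. Each `topk p` is concave in `k` (exchanging one point between a
`(k+2)`-set and a `k`-set turns them into two `(k+1)`-sets), and an infimum of concave
functions is concave, so the masses `(⋀S)(k) = f k - f (k-1)` are nonincreasing in `k`. Hence any
`k` of them sum to at most the first `k`, which telescope to `f k ≤ topk p k` for every `p ∈ S`.
-/

open Finset

section TopK

variable {α : Type*}

lemma sum_le_topk (p : α → ℝ≥0∞) {A : Finset α} {k : ℕ} (hA : A.card ≤ k) :
    ∑ x ∈ A, p x ≤ topk p k :=
  le_iSup₂_of_le A hA le_rfl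

lemma topk_le {p : α → ℝ≥0∞} {k : ℕ} {c : ℝ≥0∞}
    (h : ∀ A : Finset α, A.card ≤ k → ∑ x ∈ A, p x ≤ c) : topk p k ≤ c :=
  iSup₂_le h

lemma topk_mono (p : α → ℝ≥0∞) : Monotone (topk p) := fun _ _ hkl =>
  topk_le fun _ hA => sum_le_topk p (hA.trans hkl)

lemma topk_add_two_add_topk_le (p : α → ℝ≥0∞) (n : ℕ) :
    topk p (n + 2) + topk p n ≤ topk p (n + 1) + topk p (n + 1) := by
  refine ENNReal.biSup_add_biSup_le' (p := fun A : Finset α => A.card ≤ n + 2)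
    (q := fun A : Finset α => A.card ≤ n) ⟨∅, by simp⟩ ⟨∅, by simp⟩ fun A hA B hB => ?_
  by_cases hAB : A ⊆ B
  · have hB' : ∑ x ∈ B, p x ≤ topk p (n + 1) := sum_le_topk p (hB.trans n.le_succ)
    exact add_le_add ((sum_le_sum_of_subset hAB).trans hB') hB'
  · obtain ⟨x, hxA, hxB⟩ := not_subset.mp hAB
    have hA' : (A.erase x).card ≤ n + 1 := by rw [card_erase_of_mem hxA]; omega
    have hB' : (insert x B).card ≤ n + 1 := (card_insert_le x B).trans (by omega)
    calc ∑ y ∈ A, p y + ∑ y ∈ B, p y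
        = ∑ y ∈ A.erase x, p y + ∑ y ∈ insert x B, p y := by
          rw [sum_insert hxB, ← sum_erase_add A p hxA]; ring
      _ ≤ topk p (n + 1) + topk p (n + 1) := add_le_add (sum_le_topk p hA') (sum_le_topk p hB')

variable {S : Set (α → ℝ≥0∞)}

lemma infTopk_le_topk {p : α → ℝ≥0∞} (hp : p ∈ S) (k : ℕ) : infTopk S k ≤ topk p k :=
  iInf₂_le p hp

variable (S)

lemma infTopk_mono : Monotone (infTopk S) := fun _ _ hkl =>
  iInf₂_mono fun p _ => topk_mono p hkl

lemma infTopk_add_two_add_infTopk_le (n : ℕ) :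
    infTopk S (n + 2) + infTopk S n ≤ infTopk S (n + 1) + infTopk S (n + 1) := by
  have hsubtype : ∀ m, infTopk S m = ⨅ p : S, topk (p : α → ℝ≥0∞) m := fun m =>
    (iInf_subtype'' S fun p => topk p m).symm
  rw [hsubtype (n + 1), ENNReal.iInf_add_iInf fun p q => ?_]
  · exact le_iInf fun p => (add_le_add (infTopk_le_topk p.2 _) (infTopk_le_topk p.2 _)).trans
      (topk_add_two_add_topk_le _ n)
  · rcases le_total (topk (p : α → ℝ≥0∞) (n + 1)) (topk (q : α → ℝ≥0∞) (n + 1)) with h | h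
    · exact ⟨p, add_le_add_right h _⟩
    · exact ⟨q, add_le_add_left h _⟩

lemma glb_apply (x : ℕ+) : glb S x = infTopk S (x.natPred + 1) - infTopk S x.natPred := by
  rw [PNat.natPred_add_one]; rfl

end TopK

lemma antitone_tsub_of_concave {f : ℕ → ℝ≥0∞} (hf : Monotone f)
    (hconc : ∀ n, f (n + 2) + f n ≤ f (n + 1) + f (n + 1)) :
    Antitone fun n => f (n + 1) - f n := by
  refine antitone_nat_of_succ_le fun n => tsub_le_iff_right.mpr ?_
  rcases eq_or_ne (f n) ∞ with htop | hfin
  · have : f (n + 1) = ∞ := top_le_iff.mp (htop ▸ hf n.le_succ)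
    simp [this]
  · rw [← ENNReal.add_le_add_iff_right hfin]
    calc f (n + 2) + f n ≤ f (n + 1) + f (n + 1) := hconc n
      _ = f (n + 1) - f n + f (n + 1) + f n := by
        rw [add_right_comm, tsub_add_cancel_of_le (hf n.le_succ)]

section Sums

variable {M : Type*} [AddCommMonoid M] [PartialOrder M] [IsOrderedAddMonoid M]

lemma sum_le_sum_range_card_of_antitone {d : ℕ → M} (hd : Antitone d) (B : Finset ℕ) :
    ∑ x ∈ B, d x ≤ ∑ i ∈ range B.card, d i := by
  induction B using Finset.induction_on_max with
  | empty => simp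
  | insert a B hlt ih =>
    have haB : a ∉ B := fun h => lt_irrefl a (hlt a h)
    have hcard : B.card ≤ a := by
      simpa using card_le_card fun x hx => mem_range.mpr (hlt x hx)
    rw [sum_insert haB, card_insert_of_notMem haB, sum_range_succ, add_comm]
    exact add_le_add ih (hd hcard)

lemma sum_range_tsub_le [CanonicallyOrderedAdd M] [Sub M] [OrderedSub M] {f : ℕ → M}
    (hf : Monotone f) (n : ℕ) : ∑ i ∈ range n, (f (i + 1) - f i) ≤ f n := by
  induction n with
  | zero => simp
  | succ n ih =>
    calc ∑ i ∈ range (n + 1), (f (i + 1) - f i) ≤ f n + (f (n + 1) - f n) := by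
          rw [sum_range_succ]; exact add_le_add ih le_rfl
      _ = f (n + 1) := add_tsub_cancel_of_le (hf n.le_succ)

end Sums

lemma topk_glb_le_infTopk {α : Type*} (S : Set (α → ℝ≥0∞)) (k : ℕ) :
    topk (glb S) k ≤ infTopk S k := by
  refine topk_le fun A hA => ?_
  set d : ℕ → ℝ≥0∞ := fun n => infTopk S (n + 1) - infTopk S n
  have hd : Antitone d :=
    antitone_tsub_of_concave (infTopk_mono S) (infTopk_add_two_add_infTopk_le S)
  calc ∑ x ∈ A, glb S x = ∑ n ∈ A.image PNat.natPred, d n := by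
        rw [sum_image PNat.natPred_injective.injOn]
        exact sum_congr rfl fun x _ => glb_apply S x
    _ ≤ ∑ i ∈ range (A.image PNat.natPred).card, d i := sum_le_sum_range_card_of_antitone hd _
    _ ≤ ∑ i ∈ range k, d i := sum_le_sum_of_subset (range_subset_range.mpr (card_image_le.trans hA))
    _ ≤ infTopk S k := sum_range_tsub_le (infTopk_mono S) k

theorem glb_majorized_by_mem_general {α : Type*}
    (S : Set (α → ℝ≥0∞)) :
    ∀ p ∈ S, Majorized (glb S) p :=
  fun _ hp k => (topk_glb_le_infTopk S k).trans (infTopk_le_topk hp k)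

/-- Proposition 3(2): `q = ⋀S` is majorized by every element of `S`. -/
theorem glb_majorized_by_mem {α : Type*} [Countable α]
    (S : Set (α → ℝ≥0∞)) (hS : ∀ p ∈ S, IsPMF p) (hex : GlbExists S) :
    ∀ p ∈ S, Majorized (glb S) p :=
  glb_majorized_by_mem_general S

end MEC
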